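/- Let G be a simple graph without isolated vertices, let γ : V(G) → {1,…,n} be any function, and let d ≥ 0 be an integer. Then γ is a proper n-coloring of Γ_{2d+1} G if and only if for every color i ∈ {1,…,n} and every integer d' with 0 ≤ d' ≤ d, the set N^{=d'}(γ^{-1}(i)) is an independent set in G. -/

import Mathlib

/-- `HasWalkLen G d u v` means there is a walk of length exactly `d` from `u` to `v` in `G`. -/
def HasWalkLen {V : Type*} (G : SimpleGraph V) (d : ℕ) (u v : V) : Prop :=
  ∃ w : G.Walk u v, w.length = d

/-- `γ` is a proper coloring of the `d`-th power graph `Γ_d G`: any two (not necessarily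
distinct) vertices joined by a walk of length exactly `d` receive different colors. -/
def IsWideColoring {V : Type*} (G : SimpleGraph V) (d : ℕ) {m : ℕ} (γ : V → Fin m) : Prop :=
  ∀ u v : V, HasWalkLen G d u v → γ u ≠ γ v

/-- `N^{=d}(S)`: vertices reachable from `S` by a walk of length exactly `d`. -/
def NExact {V : Type*} (G : SimpleGraph V) (d : ℕ) (S : Set V) : Set V :=
  {v | ∃ s ∈ S, HasWalkLen G d s v}

/-- `N^{≤d}(S)`: vertices reachable from `S` by a walk of length at most `d`. -/
def NLe {V : Type*} (G : SimpleGraph V) (d : ℕ) (S : Set V) : Set V :=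
  {v | ∃ s ∈ S, ∃ w : G.Walk s v, w.length ≤ d}

/-- The exponential graph `K_c^G`: vertices are functions `V(G) → {1,…,c}`, distinct
functions `f, g` adjacent iff `f u ≠ g v` for every edge `uv` of `G`. -/
def expGraph {V : Type*} (c : ℕ) (G : SimpleGraph V) : SimpleGraph (V → Fin c) where
  Adj f g := f ≠ g ∧ ∀ u v : V, G.Adj u v → f u ≠ g v
  symm := by
    constructor
    rintro f g ⟨hne, h⟩
    exact ⟨hne.symm, fun u v huv he => h v u huv.symm he.symm⟩
  loopless := ⟨fun f h => h.1 rfl⟩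

/-- The tensor (categorical) product `G × H`. -/
def tensorProd {V W : Type*} (G : SimpleGraph V) (H : SimpleGraph W) :
    SimpleGraph (V × W) where
  Adj p q := G.Adj p.1 q.1 ∧ H.Adj p.2 q.2
  symm := ⟨fun p q h => ⟨h.1.symm, h.2.symm⟩⟩
  loopless := ⟨fun p h => G.loopless.irrefl _ h.1⟩

/-- The lexicographic product `G[H]`. -/
def lexProd {V W : Type*} (G : SimpleGraph V) (H : SimpleGraph W) :
    SimpleGraph (V × W) where
  Adj p q := G.Adj p.1 q.1 ∨ (p.1 = q.1 ∧ H.Adj p.2 q.2)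
  symm := by
    constructor
    rintro p q (h | ⟨e, h⟩)
    · exact Or.inl h.symm
    · exact Or.inr ⟨e.symm, h.symm⟩
  loopless := by
    constructor
    rintro p (h | ⟨-, h⟩)
    · exact G.loopless.irrefl _ h
    · exact H.loopless.irrefl _ h

/-- Vertices of `Ω_{2d+1} K_n`: tuples in `{0,…,d+1}^n` with exactly one coordinate equal
to `0` and at least one coordinate equal to `1`. -/
def OmegaVert (d n : ℕ) : Type :=
  {x : Fin n → Fin (d + 2) // (∃! i, x i = 0) ∧ ∃ i, x i = 1}

/-- The graph `Ω_{2d+1} K_n`: two tuples adjacent iff in every coordinate they differ by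
exactly one, or are both equal to `d+1`. -/
def omegaK (d n : ℕ) : SimpleGraph (OmegaVert d n) where
  Adj a b := ∀ i, ((a.1 i : ℕ) + 1 = (b.1 i : ℕ) ∨ (b.1 i : ℕ) + 1 = (a.1 i : ℕ))
      ∨ ((a.1 i : ℕ) = d + 1 ∧ (b.1 i : ℕ) = d + 1)
  symm := by
    constructor
    intro a b h i
    rcases h i with (h | h) | h
    · exact Or.inl (Or.inr h)
    · exact Or.inl (Or.inl h)
    · exact Or.inr ⟨h.2, h.1⟩
  loopless := by
    constructor
    intro a h
    obtain ⟨i, hi, -⟩ := a.2.1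
    have hv : (a.1 i : ℕ) = 0 := by simp [hi]
    rcases h i with (h | h) | ⟨h1, h2⟩ <;> omega


/-!
A walk of odd length `2d + 1` has a middle edge `xy` with `x` and `y` at distance (in walk
length) exactly `d` from the two ends. So `γ` fails to be a proper coloring of `Γ_{2d+1} G`
exactly when some colour class `S` has an edge inside `N^{=d}(S)`. Conversely, an edge inside
`N^{=d'}(S)` with `d' ≤ d` gives a walk of length `2d' + 1` between two vertices of `S`, which
can be padded to length `2d + 1` by going back and forth along an edge, since `G` has no
isolated vertices.
-/

namespace HasWalkLen

variable {V : Type*} {G : SimpleGraph V}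

lemma symm {d : ℕ} {u v : V} (h : HasWalkLen G d u v) : HasWalkLen G d v u :=
  let ⟨w, hw⟩ := h
  ⟨w.reverse, by simpa using hw⟩

lemma trans {a b : ℕ} {u v x : V} (huv : HasWalkLen G a u v) (hvx : HasWalkLen G b v x) :
    HasWalkLen G (a + b) u x :=
  let ⟨p, hp⟩ := huv
  let ⟨q, hq⟩ := hvx
  ⟨p.append q, by simp [hp, hq]⟩

lemma of_adj {u v : V} (h : G.Adj u v) : HasWalkLen G 1 u v :=
  ⟨h.toWalk, by simp⟩

lemma add_two {d : ℕ} {u v x : V} (hux : G.Adj u x) (h : HasWalkLen G d u v) :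
    HasWalkLen G (d + 2) u v := by
  simpa [add_comm, add_assoc] using ((of_adj hux).trans (of_adj hux.symm)).trans h

lemma add_two_mul (hG : ∀ v : V, ∃ u, G.Adj v u) {d : ℕ} {u v : V} (h : HasWalkLen G d u v)
    (k : ℕ) : HasWalkLen G (d + 2 * k) u v := by
  induction k with
  | zero => exact h
  | succ k ih =>
    obtain ⟨x, hux⟩ := hG u
    simpa [mul_add, add_assoc] using ih.add_two hux

end HasWalkLen

lemma hasWalkLen_two_mul_add_one_iff {V : Type*} {G : SimpleGraph V} {d : ℕ} {u v : V} :
    HasWalkLen G (2 * d + 1) u v ↔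
      ∃ x y, HasWalkLen G d u x ∧ HasWalkLen G d v y ∧ G.Adj x y := by
  constructor
  · rintro ⟨w, hw⟩
    refine ⟨w.getVert d, w.getVert (d + 1), ⟨w.take d, ?_⟩, ⟨(w.drop (d + 1)).reverse, ?_⟩,
      w.adj_getVert_succ (by omega)⟩
    · rw [SimpleGraph.Walk.take_length]; omega
    · rw [SimpleGraph.Walk.length_reverse, SimpleGraph.Walk.drop_length]; omega
  · rintro ⟨x, y, hux, hvy, hxy⟩
    simpa [two_mul, add_right_comm] using (hux.trans (.of_adj hxy)).trans hvy.symm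

/-- for a graph `G` without isolated vertices, `γ` is a proper `n`-coloring
of `Γ_{2d+1} G` iff every color class `S` has `N^{=d'}(S)` independent for all `d' ≤ d`. -/
theorem stmt_11 {V : Type} (G : SimpleGraph V) (hG : ∀ v : V, ∃ u, G.Adj v u)
    (n d : ℕ) (γ : V → Fin n) :
    IsWideColoring G (2 * d + 1) γ ↔
      ∀ i : Fin n, ∀ d' ≤ d, ∀ u ∈ NExact G d' (γ ⁻¹' {i}),
        ∀ v ∈ NExact G d' (γ ⁻¹' {i}), ¬ G.Adj u v := by
  constructor
  · rintro hcol i d' hd' u ⟨s, hs, hsu⟩ v ⟨t, ht, htv⟩ huv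
    have hst : HasWalkLen G (2 * d + 1) s t := by
      have := (hasWalkLen_two_mul_add_one_iff.2 ⟨u, v, hsu, htv, huv⟩).add_two_mul hG (d - d')
      rwa [show 2 * d' + 1 + 2 * (d - d') = 2 * d + 1 by omega] at this
    exact hcol s t hst (hs.trans ht.symm)
  · rintro h u v huv hγ
    obtain ⟨x, y, hux, hvy, hxy⟩ := hasWalkLen_two_mul_add_one_iff.1 huv
    exact h (γ u) d le_rfl x ⟨u, rfl, hux⟩ y ⟨v, hγ.symm, hvy⟩ hxy
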